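/- Let $p \in \mathbb{R}$ and suppose $F: \mathbb{S} \to \mathbb{C}$ is holomorphic on the strip $\mathbb{S} = \{z : -1/2 < \mathrm{Re}(z) < 1/2\}$, extends continuously to the closure, satisfies $F(z + ih) = e^{ph} F(z)$ for all $z \in \mathbb{S}$ and $h \in \mathbb{R}$, satisfies the Riemann boundary conditions $F(-1/2 + iy) \in e^{-i\pi/4}\mathbb{R}$ and $F(1/2 + iy) \in e^{i\pi/4}\mathbb{R}$ for all $y \in \mathbb{R}$, and is not identically zero. Then $p \in \pi\mathbb{Z} + \pi/2$ and there exists $c \in \mathbb{R}$ with $F(x+iy) = c\, C_{p/\pi} e^{-ipx + py}$ where $C_k = e^{i\pi(-k/2-1/4)}$. -/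

import Mathlib

open Complex Real

/-- The open vertical strip `{z : -1/2 < Re z < 1/2}`. -/
def strip : Set ℂ := {z : ℂ | -(1:ℝ)/2 < z.re ∧ z.re < 1/2}

/-- Normalization constant `Cₖ = e^{iπ(-k/2-1/4)}`. -/
noncomputable def Cnorm (k : ℝ) : ℂ :=
  Complex.exp ((Real.pi : ℂ) * Complex.I * (-(k : ℂ)/2 - 1/4))

/-!
Differentiating `F (z + i h) = e^{p h} F z` at `h = 0` gives `F' = -i p F`, so
`F z = F 0 · e^{-ipz}` on the strip and, by continuity, on its closure. At height `y = 0` the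
left boundary condition makes `F 0 = c · C_{p/π}` with `c` real, and `c ≠ 0` since `F ≢ 0`.
The right boundary condition then says that `c · e^{-i(p + π/2)}` is real, i.e. `cos p = 0`.
-/

open Set

lemma strip_eq_preimage_re : strip = re ⁻¹' Ioo (-(1:ℝ)/2) (1/2) := rfl

lemma isOpen_strip : IsOpen strip := isOpen_Ioo.preimage continuous_re

lemma isPreconnected_strip : IsPreconnected strip :=
  ((convex_Ioo _ _).linear_preimage reLm).isPreconnected

lemma closure_strip : closure strip = re ⁻¹' Icc (-(1:ℝ)/2) (1/2) := by
  rw [strip_eq_preimage_re, closure_preimage_re, closure_Ioo (by norm_num)]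

lemma hasDerivAt_of_vertical_translation_eigen {F : ℂ → ℂ} {z : ℂ} {p : ℝ}
    (hF : DifferentiableAt ℂ F z)
    (heig : ∀ h : ℝ, F (z + I * h) = Real.exp (p * h) * F z) :
    HasDerivAt F (-I * p * F z) z := by
  have hvert : HasDerivAt (fun h : ℝ => F (z + I * h)) (deriv F z * I) 0 := by
    have hline : HasDerivAt (fun w : ℂ => z + I * w) I ((0:ℝ):ℂ) := by
      simpa using ((hasDerivAt_id ((0:ℝ):ℂ)).const_mul I).const_add z
    have hF' : HasDerivAt F (deriv F z) ((fun w : ℂ => z + I * w) ((0:ℝ):ℂ)) := by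
      simpa using hF.hasDerivAt
    exact (HasDerivAt.comp (h₂ := F) (h := fun w : ℂ => z + I * w) _ hF' hline).comp_ofReal
  have hexp : HasDerivAt (fun h : ℝ => F (z + I * h)) (p * F z) 0 := by
    simp only [heig]
    simpa using ((((hasDerivAt_id (0:ℝ)).const_mul p).exp).ofReal_comp).mul_const (F z)
  have hdz : deriv F z * I = p * F z := hvert.unique hexp
  have hderiv : deriv F z = -I * p * F z := by
    linear_combination (-I) * hdz + (deriv F z) * I_sq
  exact hderiv ▸ hF.hasDerivAt

lemma IsOpen.eqOn_mul_exp_of_hasDerivAt {U : Set ℂ} (hU : IsOpen U) (hU' : IsPreconnected U)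
    {F : ℂ → ℂ} {c z₀ : ℂ} (hz₀ : z₀ ∈ U) (hF : ∀ z ∈ U, HasDerivAt F (c * F z) z) :
    EqOn F (fun z => F z₀ * exp (c * (z - z₀))) U := by
  set G : ℂ → ℂ := fun z => F z * exp (-c * z)
  have hG : ∀ z ∈ U, HasDerivAt G 0 z := fun z hz => by
    have hexp : HasDerivAt (fun w => exp (-c * w)) (exp (-c * z) * -c) z := by
      simpa using ((hasDerivAt_id z).const_mul (-c)).cexp
    have h := (hF z hz).mul hexp
    rwa [show c * F z * exp (-c * z) + F z * (exp (-c * z) * -c) = 0 by ring] at h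
  have hGconst : ∀ z ∈ U, G z = G z₀ := fun z hz =>
    hU.is_const_of_deriv_eq_zero hU'
      (fun w hw => (hG w hw).differentiableAt.differentiableWithinAt)
      (fun w hw => (hG w hw).deriv) hz hz₀
  intro z hz
  have := hGconst z hz
  simp only [G] at this
  calc F z = F z * exp (-c * z) * exp (c * z) := by rw [mul_assoc, ← Complex.exp_add]; simp
    _ = F z₀ * exp (c * (z - z₀)) := by rw [this, mul_assoc, ← Complex.exp_add]; ring_nf

lemma sin_sub_eq_zero_of_ofReal_mul_exp_eq {r s θ φ : ℝ} (hr : r ≠ 0)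
    (h : r * exp (θ * I) = exp (φ * I) * s) : Real.sin (θ - φ) = 0 := by
  have hreal : (r : ℂ) * exp ((θ - φ : ℝ) * I) = s := by
    rw [ofReal_sub, sub_mul, Complex.exp_sub, ← mul_div_assoc, h,
      mul_div_cancel_left₀ _ (Complex.exp_ne_zero _)]
  have him := congrArg im hreal
  simp only [mul_im, ofReal_re, ofReal_im, exp_ofReal_mul_I_im, exp_ofReal_mul_I_re, zero_mul,
    add_zero] at him
  exact (mul_eq_zero.mp him).resolve_left hr

lemma Cnorm_div_pi (p : ℝ) : Cnorm (p / π) = exp ((-(p / 2) - π / 4 : ℝ) * I) := by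
  rw [Cnorm]
  congr 1
  push_cast
  field_simp

lemma IsOpen.eqOn_closure_mul_exp_of_vertical_translation_eigen {U : Set ℂ} (hU : IsOpen U)
    (hU' : IsPreconnected U) {z₀ : ℂ} (hz₀ : z₀ ∈ U) {p : ℝ} {F : ℂ → ℂ}
    (hdiff : DifferentiableOn ℂ F U) (hcont : ContinuousOn F (closure U))
    (heig : ∀ z ∈ U, ∀ h : ℝ, F (z + I * h) = Real.exp (p * h) * F z) :
    EqOn F (fun z => F z₀ * exp (-I * p * (z - z₀))) (closure U) :=
  (hU.eqOn_mul_exp_of_hasDerivAt hU' hz₀ fun z hz =>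
      hasDerivAt_of_vertical_translation_eigen (hdiff.differentiableAt (hU.mem_nhds hz))
        (heig z hz)).of_subset_closure hcont (by fun_prop) subset_closure subset_rfl

lemma eq_ofReal_mul_Cnorm_of_mul_exp_eq {a : ℂ} {p r : ℝ}
    (h : a * exp (-I * p * (-1 / 2)) = exp (-π * I / 4) * r) : a = r * Cnorm (p / π) := by
  rw [eq_div_of_mul_eq (Complex.exp_ne_zero _) h, Cnorm_div_pi, mul_comm, mul_div_assoc,
    ← Complex.exp_sub]
  congr 2
  push_cast
  ring_nf

lemma cos_eq_zero_of_ofReal_mul_Cnorm_mul_exp_eq {p r s : ℝ} (hr : r ≠ 0)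
    (h : r * Cnorm (p / π) * exp (-I * p * (1 / 2)) = exp (π * I / 4) * s) :
    Real.cos p = 0 := by
  have hrot :
      (r : ℂ) * exp ((-(p / 2) - π / 4 - p / 2 : ℝ) * I) = exp ((π / 4 : ℝ) * I) * s := by
    rw [show ((π / 4 : ℝ) : ℂ) * I = π * I / 4 by push_cast; ring, ← h, Cnorm_div_pi, mul_assoc,
      ← Complex.exp_add]
    congr 2
    push_cast
    ring
  have := sin_sub_eq_zero_of_ofReal_mul_exp_eq hr hrot
  rwa [show -(p / 2) - π / 4 - p / 2 - π / 4 = -(p + π / 2) by ring, Real.sin_neg,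
    Real.sin_add_pi_div_two, neg_eq_zero] at this

/-- Classification of vertical translation eigenfunctions with Riemann boundary
values in the strip: a nonzero holomorphic `F` on the strip, continuous up to the
boundary, with `F(z+ih) = e^{ph}F(z)`, with `F(-1/2+iy) ∈ e^{-iπ/4}ℝ` and
`F(1/2+iy) ∈ e^{iπ/4}ℝ`, forces `p ∈ πℤ + π/2` and
`F(x+iy) = c C_{p/π} e^{-ipx+py}` for a real constant `c`. -/
theorem strip_translation_eigenfunctions (p : ℝ) (F : ℂ → ℂ)
    (hdiff : DifferentiableOn ℂ F strip)
    (hcont : ContinuousOn F (closure strip))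
    (heig : ∀ z ∈ strip, ∀ h : ℝ, F (z + Complex.I * (h : ℂ)) = Real.exp (p * h) * F z)
    (hbL : ∀ y : ℝ, ∃ r : ℝ,
      F (-(1:ℂ)/2 + Complex.I * (y : ℂ)) = Complex.exp (-(Real.pi : ℂ) * Complex.I / 4) * (r : ℂ))
    (hbR : ∀ y : ℝ, ∃ r : ℝ,
      F ((1:ℂ)/2 + Complex.I * (y : ℂ)) = Complex.exp ((Real.pi : ℂ) * Complex.I / 4) * (r : ℂ))
    (hne : ∃ z ∈ strip, F z ≠ 0) :
    (∃ n : ℤ, p = Real.pi * n + Real.pi / 2) ∧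
    ∃ c : ℝ, ∀ x y : ℝ, -(1:ℝ)/2 < x → x < 1/2 →
      F ((x : ℂ) + Complex.I * (y : ℂ))
        = (c : ℂ) * Cnorm (p / Real.pi) *
            Complex.exp (-Complex.I * (p : ℂ) * (x : ℂ) + (p : ℂ) * (y : ℂ)) := by
  have hform : ∀ z ∈ closure strip, F z = F 0 * exp (-I * p * z) := fun z hz => by
    simpa using isOpen_strip.eqOn_closure_mul_exp_of_vertical_translation_eigen
      isPreconnected_strip (show (0 : ℂ) ∈ strip by norm_num [strip]) hdiff hcont heig hz
  obtain ⟨r₁, hr₁⟩ := hbL 0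
  obtain ⟨r₂, hr₂⟩ := hbR 0
  rw [hform _ (by rw [closure_strip]; norm_num)] at hr₁
  rw [hform _ (by rw [closure_strip]; norm_num)] at hr₂
  simp only [ofReal_zero, mul_zero, add_zero] at hr₁ hr₂
  have hF0 : F 0 = r₁ * Cnorm (p / π) := eq_ofReal_mul_Cnorm_of_mul_exp_eq hr₁
  have hr₁0 : r₁ ≠ 0 := by
    rintro rfl
    obtain ⟨z, hz, hFz⟩ := hne
    simp [hform z (subset_closure hz), hF0] at hFz
  obtain ⟨k, hk⟩ :=
    Real.cos_eq_zero_iff.mp (cos_eq_zero_of_ofReal_mul_Cnorm_mul_exp_eq hr₁0 (hF0 ▸ hr₂))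
  refine ⟨⟨k, by linarith⟩, r₁, fun x y hx hx' => ?_⟩
  rw [hform _ (subset_closure ⟨by simpa using hx, by simpa using hx'⟩), hF0]
  congr 2
  linear_combination (-(p : ℂ) * y) * I_sq
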